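/- In a cubical set with connections, if θ = Γ_t^β(τ) for τ ∈ K_{n-1}, then ∂_{n+1} Γ_t^β(θ) + Γ_t^β ∂_n(θ) = (-1)^{t+1} β θ + 2 Γ_t^β Γ_{t-1}^β Σ_{i=1}^{t-1} (-1)^i (f_i^- − f_i^+)(τ), where β is interpreted as the sign +1 or −1. -/

import Mathlib

structure PrecubicalConn where
  K : ℕ → Type*
  face : Bool → ∀ n : ℕ, ℕ → K (n + 1) → K n
  degen : ∀ n : ℕ, ℕ → K n → K (n + 1)
  conn : Bool → ∀ n : ℕ, ℕ → K n → K (n + 1)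

/-- The axioms of a cubical set with connections (`true` stands for `+`, `false` for `-`;
indices are 1-based with explicit range guards). -/
structure CubicalConnAxioms (P : PrecubicalConn) : Prop where
  face_face : ∀ (α β : Bool) (n i j : ℕ) (σ : P.K (n + 2)), 1 ≤ i → i < j → j ≤ n + 2 →
    P.face α n i (P.face β (n + 1) j σ) = P.face β n (j - 1) (P.face α (n + 1) i σ)
  degen_degen : ∀ (n i j : ℕ) (σ : P.K n), 1 ≤ i → i ≤ j → j ≤ n + 1 →
    P.degen (n + 1) i (P.degen n j σ) = P.degen (n + 1) (j + 1) (P.degen n i σ)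
  face_degen_lt : ∀ (α : Bool) (n i j : ℕ) (σ : P.K (n + 1)), 1 ≤ i → i < j → j ≤ n + 2 →
    P.face α (n + 1) i (P.degen (n + 1) j σ) = P.degen n (j - 1) (P.face α n i σ)
  face_degen_gt : ∀ (α : Bool) (n i j : ℕ) (σ : P.K (n + 1)), 1 ≤ j → j < i → i ≤ n + 2 →
    P.face α (n + 1) i (P.degen (n + 1) j σ) = P.degen n j (P.face α n (i - 1) σ)
  face_degen_eq : ∀ (α : Bool) (n i : ℕ) (σ : P.K n), 1 ≤ i → i ≤ n + 1 →
    P.face α n i (P.degen n i σ) = σ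
  conn_conn : ∀ (α β : Bool) (n i j : ℕ) (σ : P.K n), 1 ≤ i → i ≤ j → j ≤ n →
    P.conn α (n + 1) i (P.conn β n j σ) = P.conn β (n + 1) (j + 1) (P.conn α n i σ)
  conn_degen_lt : ∀ (α : Bool) (n i j : ℕ) (σ : P.K n), 1 ≤ i → i < j → j ≤ n + 1 →
    P.conn α (n + 1) i (P.degen n j σ) = P.degen (n + 1) (j + 1) (P.conn α n i σ)
  conn_degen_gt : ∀ (α : Bool) (n i j : ℕ) (σ : P.K n), 1 ≤ j → j < i → i ≤ n + 1 →
    P.conn α (n + 1) i (P.degen n j σ) = P.degen (n + 1) j (P.conn α n (i - 1) σ)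
  conn_degen_eq : ∀ (α : Bool) (n i : ℕ) (σ : P.K n), 1 ≤ i → i ≤ n + 1 →
    P.conn α (n + 1) i (P.degen n i σ) = P.degen (n + 1) (i + 1) (P.degen n i σ)
  face_conn_lt : ∀ (α β : Bool) (n i j : ℕ) (σ : P.K (n + 1)), 1 ≤ i → i < j → j ≤ n + 1 →
    P.face α (n + 1) i (P.conn β (n + 1) j σ) = P.conn β n (j - 1) (P.face α n i σ)
  face_conn_gt : ∀ (α β : Bool) (n i j : ℕ) (σ : P.K (n + 1)), 1 ≤ j → j + 1 < i → i ≤ n + 2 →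
    P.face α (n + 1) i (P.conn β (n + 1) j σ) = P.conn β n j (P.face α n (i - 1) σ)
  face_conn_self : ∀ (β : Bool) (n i j : ℕ) (σ : P.K n), 1 ≤ j → j ≤ n → (i = j ∨ i = j + 1) →
    P.face β n i (P.conn β n j σ) = σ
  face_conn_opp : ∀ (α β : Bool) (n i j : ℕ) (σ : P.K (n + 1)), 1 ≤ j → j ≤ n + 1 →
    (i = j ∨ i = j + 1) → α ≠ β →
    P.face α (n + 1) i (P.conn β (n + 1) j σ) = P.degen n j (P.face α n j σ)

/-- A cube is degenerate if it is of the form `ε_i f_i^+ σ`. -/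
def PrecubicalConn.Degenerate (P : PrecubicalConn) : ∀ {n : ℕ}, P.K n → Prop :=
  fun {n} σ =>
    match n, σ with
    | 0, _ => False
    | m + 1, σ => ∃ i : ℕ, 1 ≤ i ∧ i ≤ m + 1 ∧ σ = P.degen m i (P.face true m i σ)

/-- A cube is a connection if it lies in the image of some `Γ_i^β`. -/
def PrecubicalConn.IsConn (P : PrecubicalConn) : ∀ {n : ℕ}, P.K n → Prop :=
  fun {n} σ =>
    match n, σ with
    | 0, _ => False
    | m + 1, σ => ∃ (β : Bool) (i : ℕ) (τ : P.K m), 1 ≤ i ∧ i ≤ m ∧ σ = P.conn β m i τ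

/-- The linear extension of the face map `f_i^α` to the free `R`-module on the cubes. -/
noncomputable def Fmap (P : PrecubicalConn) (R : Type*) [CommRing R] (α : Bool) (n i : ℕ) :
    (P.K (n + 1) →₀ R) →ₗ[R] (P.K n →₀ R) :=
  Finsupp.lmapDomain R R (P.face α n i)

/-- The linear extension of the connection map `Γ_i^β` to the free `R`-module on the cubes. -/
noncomputable def Gmap (P : PrecubicalConn) (R : Type*) [CommRing R] (β : Bool) (n i : ℕ) :
    (P.K n →₀ R) →ₗ[R] (P.K (n + 1) →₀ R) :=
  Finsupp.lmapDomain R R (P.conn β n i)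

/-- The cubical boundary operator `∂ σ = ∑_{i=1}^{n+1} (-1)^i (f_i^- σ - f_i^+ σ)`. -/
noncomputable def bdry (P : PrecubicalConn) (R : Type*) [CommRing R] (n : ℕ) :
    (P.K (n + 1) →₀ R) →ₗ[R] (P.K n →₀ R) :=
  ∑ i ∈ Finset.Icc 1 (n + 1), ((-1 : R) ^ i) • (Fmap P R false n i - Fmap P R true n i)

/-- The submodule generated by the degenerate cubes. -/
noncomputable def degenSub (P : PrecubicalConn) (R : Type*) [CommRing R] (n : ℕ) :
    Submodule R (P.K n →₀ R) :=
  Submodule.span R {x | ∃ σ : P.K n, P.Degenerate σ ∧ x = Finsupp.single σ 1}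

/-- The submodule generated by the connection cubes. -/
noncomputable def connSub (P : PrecubicalConn) (R : Type*) [CommRing R] (n : ℕ) :
    Submodule R (P.K n →₀ R) :=
  Submodule.span R {x | ∃ σ : P.K n, P.IsConn σ ∧ x = Finsupp.single σ 1}

/-- The sign `±1` associated to `β ∈ {+,-}`. -/
def sgn (R : Type*) [CommRing R] (β : Bool) : R := if β then 1 else -1



/-! The faces of `Γ_t σ` are `Γ_{t-1} f_i σ` for `i < t` and `Γ_t f_{i-1} σ` for `i > t + 1`,
while `f_t^α Γ_t σ = f_{t+1}^α Γ_t σ`. Hence in `∂ Γ_t σ + Γ_t ∂ σ` everything with index `> t`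
cancels, leaving `∑_{i<t} (-1)^i (Γ_{t-1} + Γ_t) d_i σ + (-1)^t Γ_t d_t σ` with
`d_i = f_i^- - f_i^+`. For `σ = θ = Γ_t τ` we have `d_i θ = Γ_{t-1} d_i τ` for `i < t`, and
`Γ_{t-1} Γ_{t-1} = Γ_t Γ_{t-1}` turns the sum into `2 Γ_t Γ_{t-1} ∑_{i<t} (-1)^i d_i τ`; finally
`d_t θ = β (ε_t f_t^{-β} τ - τ)`, and `Γ_t ε_t = ε_{t+1} ε_t` makes the first part degenerate. -/

open Finset

section

variable {P : PrecubicalConn} {R : Type*} [CommRing R]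

theorem Fmap_single (α : Bool) (n i : ℕ) (σ : P.K (n + 1)) :
    Fmap P R α n i (Finsupp.single σ 1) = Finsupp.single (P.face α n i σ) 1 := by
  simp [Fmap]

theorem Gmap_single (β : Bool) (n i : ℕ) (σ : P.K n) :
    Gmap P R β n i (Finsupp.single σ 1) = Finsupp.single (P.conn β n i σ) 1 := by
  simp [Gmap]

theorem Finsupp.mapDomain_mapDomain_eq {A B B' C M : Type*} [AddCommMonoid M]
    {f : A → B} {g : B → C} {f' : A → B'} {g' : B' → C} (h : ∀ a, g (f a) = g' (f' a))
    (x : A →₀ M) :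
    Finsupp.mapDomain g (Finsupp.mapDomain f x) =
      Finsupp.mapDomain g' (Finsupp.mapDomain f' x) := by
  rw [← Finsupp.mapDomain_comp, ← Finsupp.mapDomain_comp]
  exact congrArg (Finsupp.mapDomain · x) (funext h)

theorem Finset.sum_Icc_one_split {M : Type*} [AddCommMonoid M] (f : ℕ → M) {s m : ℕ}
    (h : s ≤ m) :
    ∑ i ∈ Icc 1 (m + 1), f i =
      ∑ i ∈ Icc 1 s, f i + f (s + 1) + ∑ i ∈ Icc (s + 2) (m + 1), f i := by
  rw [← Ico_add_one_right_eq_Icc, ← Ico_add_one_right_eq_Icc, ← Ico_add_one_right_eq_Icc,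
    ← sum_Ico_consecutive f (by omega : 1 ≤ s + 2) (by omega : s + 2 ≤ m + 1 + 1),
    sum_Ico_succ_top (by omega : 1 ≤ s + 1)]

theorem Finset.sum_Icc_add_one {M : Type*} [AddCommMonoid M] (f : ℕ → M) (a b : ℕ) :
    ∑ i ∈ Icc (a + 1) (b + 1), f i = ∑ i ∈ Icc a b, f (i + 1) := by
  rw [← map_add_right_Icc, sum_map]
  rfl

variable (P R) in
noncomputable def faceDiff (n i : ℕ) : (P.K (n + 1) →₀ R) →ₗ[R] (P.K n →₀ R) :=
  Fmap P R false n i - Fmap P R true n i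

theorem Fmap_sub_Fmap (n i : ℕ) :
    Fmap P R false n i - Fmap P R true n i = faceDiff P R n i :=
  rfl

theorem bdry_apply (n : ℕ) (x : P.K (n + 1) →₀ R) :
    bdry P R n x = ∑ i ∈ Icc 1 (n + 1), (-1 : R) ^ i • faceDiff P R n i x := by
  simp [bdry, faceDiff, LinearMap.sum_apply]

theorem Fmap_Gmap_of_lt (hP : CubicalConnAxioms P) (α β : Bool) {n i j : ℕ} (hi : 1 ≤ i)
    (hij : i < j) (hj : j ≤ n + 1) (x : P.K (n + 1) →₀ R) :
    Fmap P R α (n + 1) i (Gmap P R β (n + 1) j x) = Gmap P R β n (j - 1) (Fmap P R α n i x) :=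
  Finsupp.mapDomain_mapDomain_eq (fun σ => hP.face_conn_lt α β n i j σ hi hij hj) x

theorem Fmap_Gmap_of_gt (hP : CubicalConnAxioms P) (α β : Bool) {n i j : ℕ} (hj : 1 ≤ j)
    (hji : j + 1 < i) (hi : i ≤ n + 2) (x : P.K (n + 1) →₀ R) :
    Fmap P R α (n + 1) i (Gmap P R β (n + 1) j x) = Gmap P R β n j (Fmap P R α n (i - 1) x) :=
  Finsupp.mapDomain_mapDomain_eq (fun σ => hP.face_conn_gt α β n i j σ hj hji hi) x

theorem Fmap_succ_Gmap_self (hP : CubicalConnAxioms P) (α β : Bool) {n j : ℕ} (hj : 1 ≤ j)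
    (hjn : j ≤ n + 1) (x : P.K (n + 1) →₀ R) :
    Fmap P R α (n + 1) (j + 1) (Gmap P R β (n + 1) j x) =
      Fmap P R α (n + 1) j (Gmap P R β (n + 1) j x) := by
  refine Finsupp.mapDomain_mapDomain_eq (fun σ => ?_) x
  by_cases hαβ : α = β
  · subst hαβ
    rw [hP.face_conn_self α (n + 1) (j + 1) j σ hj hjn (Or.inr rfl),
      hP.face_conn_self α (n + 1) j j σ hj hjn (Or.inl rfl)]
  · rw [hP.face_conn_opp α β n (j + 1) j σ hj hjn (Or.inr rfl) hαβ,
      hP.face_conn_opp α β n j j σ hj hjn (Or.inl rfl) hαβ]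

theorem Gmap_Gmap (hP : CubicalConnAxioms P) (α β : Bool) {n i j : ℕ} (hi : 1 ≤ i)
    (hij : i ≤ j) (hj : j ≤ n) (x : P.K n →₀ R) :
    Gmap P R α (n + 1) i (Gmap P R β n j x) = Gmap P R β (n + 1) (j + 1) (Gmap P R α n i x) :=
  Finsupp.mapDomain_mapDomain_eq (fun σ => hP.conn_conn α β n i j σ hi hij hj) x

theorem faceDiff_Gmap_of_lt (hP : CubicalConnAxioms P) (β : Bool) {n i j : ℕ} (hi : 1 ≤ i)
    (hij : i < j) (hj : j ≤ n + 1) (x : P.K (n + 1) →₀ R) :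
    faceDiff P R (n + 1) i (Gmap P R β (n + 1) j x) =
      Gmap P R β n (j - 1) (faceDiff P R n i x) := by
  simp only [faceDiff, LinearMap.sub_apply, map_sub, Fmap_Gmap_of_lt hP _ β hi hij hj]

theorem faceDiff_Gmap_of_gt (hP : CubicalConnAxioms P) (β : Bool) {n i j : ℕ} (hj : 1 ≤ j)
    (hji : j + 1 < i) (hi : i ≤ n + 2) (x : P.K (n + 1) →₀ R) :
    faceDiff P R (n + 1) i (Gmap P R β (n + 1) j x) =
      Gmap P R β n j (faceDiff P R n (i - 1) x) := by
  simp only [faceDiff, LinearMap.sub_apply, map_sub, Fmap_Gmap_of_gt hP _ β hj hji hi]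

theorem faceDiff_succ_Gmap_self (hP : CubicalConnAxioms P) (β : Bool) {n j : ℕ} (hj : 1 ≤ j)
    (hjn : j ≤ n + 1) (x : P.K (n + 1) →₀ R) :
    faceDiff P R (n + 1) (j + 1) (Gmap P R β (n + 1) j x) =
      faceDiff P R (n + 1) j (Gmap P R β (n + 1) j x) := by
  simp only [faceDiff, LinearMap.sub_apply, Fmap_succ_Gmap_self hP _ β hj hjn]

theorem bdry_Gmap (hP : CubicalConnAxioms P) (β : Bool) {m s : ℕ} (hs : s ≤ m)
    (x : P.K (m + 1) →₀ R) :
    bdry P R (m + 1) (Gmap P R β (m + 1) (s + 1) x) =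
      ∑ i ∈ Icc 1 s, (-1 : R) ^ i • Gmap P R β m s (faceDiff P R m i x)
        - ∑ j ∈ Icc (s + 2) (m + 1), (-1 : R) ^ j • Gmap P R β m (s + 1) (faceDiff P R m j x) := by
  rw [bdry_apply, sum_Icc_one_split _ (by omega : s + 1 ≤ m + 1), sum_Icc_succ_top (by omega),
    sum_Icc_add_one, faceDiff_succ_Gmap_self hP β (by omega) (by omega),
    pow_succ (-1 : R) (s + 1), mul_neg_one, neg_smul, add_neg_cancel_right, sub_eq_add_neg,
    ← sum_neg_distrib]
  congr 1
  · refine sum_congr rfl fun i hi => ?_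
    rw [mem_Icc] at hi
    rw [faceDiff_Gmap_of_lt hP β hi.1 (by omega) (by omega), Nat.add_sub_cancel]
  · refine sum_congr rfl fun j hj => ?_
    rw [mem_Icc] at hj
    rw [faceDiff_Gmap_of_gt hP β (by omega) (by omega) (by omega), Nat.add_sub_cancel, pow_succ,
      mul_neg_one, neg_smul]

theorem bdry_Gmap_add_Gmap_bdry (hP : CubicalConnAxioms P) (β : Bool) {m s : ℕ} (hs : s ≤ m)
    (x : P.K (m + 1) →₀ R) :
    bdry P R (m + 1) (Gmap P R β (m + 1) (s + 1) x) + Gmap P R β m (s + 1) (bdry P R m x) =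
      ∑ i ∈ Icc 1 s, (-1 : R) ^ i •
          (Gmap P R β m s (faceDiff P R m i x) + Gmap P R β m (s + 1) (faceDiff P R m i x))
        + (-1 : R) ^ (s + 1) • Gmap P R β m (s + 1) (faceDiff P R m (s + 1) x) := by
  rw [bdry_Gmap hP β hs, bdry_apply, sum_Icc_one_split _ hs]
  simp only [map_add, map_sum, map_smul, smul_add, sum_add_distrib]
  abel

theorem Gmap_add_Gmap_faceDiff_Gmap (hP : CubicalConnAxioms P) (β : Bool) {n s i : ℕ}
    (hi : 1 ≤ i) (his : i ≤ s) (hs : s ≤ n) (x : P.K (n + 1) →₀ R) :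
    Gmap P R β (n + 1) s (faceDiff P R (n + 1) i (Gmap P R β (n + 1) (s + 1) x))
        + Gmap P R β (n + 1) (s + 1) (faceDiff P R (n + 1) i (Gmap P R β (n + 1) (s + 1) x)) =
      (2 : R) • Gmap P R β (n + 1) (s + 1) (Gmap P R β n s (faceDiff P R n i x)) := by
  rw [faceDiff_Gmap_of_lt hP β hi (by omega) (by omega), Nat.add_sub_cancel,
    Gmap_Gmap hP β β (by omega) le_rfl hs, two_smul]

theorem bdry_Gmap_Gmap_add_Gmap_bdry_Gmap (hP : CubicalConnAxioms P) (β : Bool) {n s : ℕ}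
    (hs : s ≤ n) (x : P.K (n + 1) →₀ R) :
    bdry P R (n + 2) (Gmap P R β (n + 2) (s + 1) (Gmap P R β (n + 1) (s + 1) x))
        + Gmap P R β (n + 1) (s + 1) (bdry P R (n + 1) (Gmap P R β (n + 1) (s + 1) x)) =
      (2 : R) • Gmap P R β (n + 1) (s + 1)
          (Gmap P R β n s (∑ i ∈ Icc 1 s, (-1 : R) ^ i • faceDiff P R n i x))
        + (-1 : R) ^ (s + 1) • Gmap P R β (n + 1) (s + 1)
          (faceDiff P R (n + 1) (s + 1) (Gmap P R β (n + 1) (s + 1) x)) := by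
  rw [bdry_Gmap_add_Gmap_bdry hP β (by omega)]
  congr 1
  simp only [map_sum, map_smul, smul_sum]
  refine sum_congr rfl fun i hi => ?_
  rw [mem_Icc] at hi
  rw [Gmap_add_Gmap_faceDiff_Gmap hP β hi.1 hi.2 hs, smul_comm]

theorem faceDiff_Gmap_single_self (hP : CubicalConnAxioms P) (β : Bool) {n t : ℕ} (ht : 1 ≤ t)
    (htn : t ≤ n + 1) (τ : P.K (n + 1)) :
    faceDiff P R (n + 1) t (Gmap P R β (n + 1) t (Finsupp.single τ 1)) =
      sgn R β • (Finsupp.single (P.degen n t (P.face (!β) n t τ)) 1 - Finsupp.single τ 1) := by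
  have hself := hP.face_conn_self β (n + 1) t t τ ht htn (Or.inl rfl)
  have hopp := hP.face_conn_opp (!β) β n t t τ ht htn (Or.inl rfl) (Bool.not_ne_self β)
  simp only [faceDiff, LinearMap.sub_apply, Gmap_single, Fmap_single]
  cases β <;> simp_all [sgn]

theorem Gmap_faceDiff_Gmap_single_self (hP : CubicalConnAxioms P) (β : Bool) {n t : ℕ}
    (ht : 1 ≤ t) (htn : t ≤ n + 1) (τ : P.K (n + 1)) :
    Gmap P R β (n + 1) t (faceDiff P R (n + 1) t (Gmap P R β (n + 1) t (Finsupp.single τ 1))) =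
      sgn R β • (Finsupp.single (P.degen (n + 1) (t + 1) (P.degen n t (P.face (!β) n t τ))) 1
        - Gmap P R β (n + 1) t (Finsupp.single τ 1)) := by
  rw [faceDiff_Gmap_single_self hP β ht htn, map_smul, map_sub, Gmap_single, Gmap_single,
    hP.conn_degen_eq β n t _ ht htn]

theorem degenerate_degen (hP : CubicalConnAxioms P) {n i : ℕ} (hi : 1 ≤ i) (hin : i ≤ n + 1)
    (σ : P.K n) :
    P.Degenerate (P.degen n i σ) :=
  ⟨i, hi, hin, by rw [hP.face_degen_eq true n i σ hi hin]⟩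

theorem single_mem_degenSub {n : ℕ} {σ : P.K n} (hσ : P.Degenerate σ) :
    Finsupp.single σ 1 ∈ degenSub P R n :=
  Submodule.subset_span ⟨σ, hσ, rfl⟩

end

/-- Corollary 3.4(i): for `θ = Γ_t^β τ`, in the non-degenerate chain complex,
`∂ Γ_t^β θ + Γ_t^β ∂ θ = (-1)^{t+1} β θ + 2 Γ_t^β Γ_{t-1}^β ∑_{i=1}^{t-1} (-1)^i (f_i^- - f_i^+) τ`. -/
theorem conn_of_conn_identity (P : PrecubicalConn) (hP : CubicalConnAxioms P)
    (R : Type*) [CommRing R] (n t : ℕ) (β : Bool) (τ : P.K (n + 1))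
    (ht1 : 1 ≤ t) (ht2 : t ≤ n + 1) (θ : P.K (n + 2)) (hθ : θ = P.conn β (n + 1) t τ) :
    (bdry P R (n + 2) (Finsupp.single (P.conn β (n + 2) t θ) 1)
        + Gmap P R β (n + 1) t (bdry P R (n + 1) (Finsupp.single θ 1)))
      - ((((-1 : R) ^ (t + 1)) * sgn R β) • Finsupp.single θ 1
         + (2 : R) • Gmap P R β (n + 1) t (Gmap P R β n (t - 1)
            (∑ i ∈ Finset.Icc 1 (t - 1),
              ((-1 : R) ^ i) • ((Fmap P R false n i - Fmap P R true n i) (Finsupp.single τ 1)))))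
      ∈ degenSub P R (n + 2) := by
  obtain ⟨s, rfl⟩ : ∃ s, t = s + 1 := ⟨t - 1, by omega⟩
  subst hθ
  rw [← Gmap_single β (n + 2), ← Gmap_single β (n + 1),
    bdry_Gmap_Gmap_add_Gmap_bdry_Gmap hP β (by omega),
    Gmap_faceDiff_Gmap_single_self hP β ht1 ht2]
  simp only [Nat.add_sub_cancel, Fmap_sub_Fmap]
  have hdeg := single_mem_degenSub (R := R) (degenerate_degen hP (i := s + 1 + 1)
    (by omega) (by omega) (P.degen n (s + 1) (P.face (!β) n (s + 1) τ)))
  convert Submodule.smul_mem _ ((-1 : R) ^ (s + 1) * sgn R β) hdeg using 1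
  module
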